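/- arXiv:2301.08812 — 2 statements merged into one kernel-verified Lean document; each statement's English description precedes it below -/
import Mathlib

section
/- Let X and Y be real Hilbert spaces and let K : X × Y → ℝ be twice continuously Fréchet differentiable, with gradient maps ∇_E K : X × Y → X and ∇_B K : X × Y → Y defined by DK(E,B)(h,k) = ⟪∇_E K(E,B), h⟫_X + ⟪∇_B K(E,B), k⟫_Y. Define H : X × Y → ℝ by H(E,B) = K(E,B) − ⟪E, ∇_E K(E,B)⟫_X + (1/(8π))(‖E‖²_X + ‖B‖²_Y), and set D(E,B) = E − 4π ∇_E K(E,B) and Hf(E,B) = B + 4π ∇_B K(E,B). Suppose the map Φ(E,B) = (D(E,B), B) is a bijection of X × Y whose inverse is continuously differentiable. Then H̄ := H ∘ Φ⁻¹ is differentiable and for every (E,B) ∈ X × Y and every (δD, δB) ∈ X × Y, DH̄(Φ(E,B))(δD, δB) = ⟪E/(4π), δD⟫_X + ⟪Hf(E,B)/(4π), δB⟫_Y; equivalently, the gradient of H̄ at (D,B) = Φ(E,B) is (E/(4π), Hf(E,B)/(4π)). -/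
open RealInnerProductSpace

/-!
Write `c = 4π` and `(E, B) = Ψ (D, B)`. Substituting `D = E - c ∇_E K` into `H` removes
the gradient term: `H̄ (D, B) = K (E, B) + c⁻¹ ⟪E, D⟫ - (2c)⁻¹ ‖E‖² + (2c)⁻¹ ‖B‖²`, a
Legendre transform in the first variable. Differentiating, every term carrying the unknown
derivative of `E` with respect to `(D, B)` is `⟪∇_E K - c⁻¹ E + c⁻¹ D, δE⟫ = 0`, so only
the explicit dependence on `D` and `B` survives.
-/

namespace MaxwellHamiltonian

theorem snd_apply_eq_of_rightInverse {α α' β : Type*} {Φ : α × β → α' × β}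
    {Ψ : α' × β → α × β} (hΦ : ∀ p, (Φ p).2 = p.2) (hright : Function.RightInverse Ψ Φ)
    (z : α' × β) : (Ψ z).2 = z.2 := by
  conv_rhs => rw [← hright z]
  exact (hΦ (Ψ z)).symm

theorem hamiltonian_eq_legendre {X Y : Type*} [NormedAddCommGroup X] [InnerProductSpace ℝ X]
    [NormedAddCommGroup Y] {K H : X × Y → ℝ} {gE : X × Y → X} {Φ : X × Y → X × Y}
    {c : ℝ} (hc : c ≠ 0)
    (hH : ∀ p : X × Y, H p = K p - ⟪p.1, gE p⟫ + (2 * c)⁻¹ * (‖p.1‖ ^ 2 + ‖p.2‖ ^ 2))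
    (hΦ : ∀ p : X × Y, Φ p = (p.1 - c • gE p, p.2)) (p : X × Y) :
    H p = K p + c⁻¹ * ⟪p.1, (Φ p).1⟫ - (2 * c)⁻¹ * ‖p.1‖ ^ 2 + (2 * c)⁻¹ * ‖(Φ p).2‖ ^ 2 := by
  rw [hH, hΦ, inner_sub_right, real_inner_smul_right, real_inner_self_eq_norm_sq]
  field_simp
  ring

theorem hasFDerivAt_legendre {X Y : Type*} [NormedAddCommGroup X] [InnerProductSpace ℝ X]
    [NormedAddCommGroup Y] [InnerProductSpace ℝ Y] {K : X × Y → ℝ} {gE : X × Y → X}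
    {gB : X × Y → Y}
    (hgrad : ∀ p : X × Y, HasFDerivAt K
      (((innerSL ℝ (gE p)).comp (ContinuousLinearMap.fst ℝ X Y)) +
        ((innerSL ℝ (gB p)).comp (ContinuousLinearMap.snd ℝ X Y))) p)
    {c : ℝ} (hc : c ≠ 0) {e : X × Y → X} {e' : X × Y →L[ℝ] X} {E : X} {B : Y}
    (he : HasFDerivAt e e' (E - c • gE (E, B), B)) (hE : e (E - c • gE (E, B), B) = E) :
    HasFDerivAt
      (fun z : X × Y => K (e z, z.2) + c⁻¹ * ⟪e z, z.1⟫ - (2 * c)⁻¹ * ‖e z‖ ^ 2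
        + (2 * c)⁻¹ * ‖z.2‖ ^ 2)
      (((innerSL ℝ (c⁻¹ • E)).comp (ContinuousLinearMap.fst ℝ X Y)) +
        ((innerSL ℝ (c⁻¹ • (B + c • gB (E, B)))).comp (ContinuousLinearMap.snd ℝ X Y)))
      (E - c • gE (E, B), B) := by
  set z : X × Y := (E - c • gE (E, B), B)
  have hK : HasFDerivAt (fun z : X × Y => K (e z, z.2))
      ((((innerSL ℝ (gE (E, B))).comp (ContinuousLinearMap.fst ℝ X Y)) +
        ((innerSL ℝ (gB (E, B))).comp (ContinuousLinearMap.snd ℝ X Y))).comp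
          (e'.prod (ContinuousLinearMap.snd ℝ X Y))) z := by
    refine HasFDerivAt.comp z ?_ (he.prodMk hasFDerivAt_snd)
    rw [show (e z, z.2) = (E, B) by rw [hE]]
    exact hgrad (E, B)
  have hD := (he.inner ℝ hasFDerivAt_fst).const_mul c⁻¹
  have hE2 := he.norm_sq.const_mul (2 * c)⁻¹
  have hB2 := (hasFDerivAt_snd (p := z)).norm_sq.const_mul (2 * c)⁻¹
  refine (((hK.add hD).sub hE2).add hB2).congr_fderiv ?_
  refine ContinuousLinearMap.ext fun v => ?_
  simp [z, hE, fderivInnerCLM_apply, inner_sub_right, real_inner_smul_right,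
    real_inner_comm (e' _)]
  field_simp
  ring

theorem hasFDerivAt_hamiltonian_comp_inverse {X Y : Type*} [NormedAddCommGroup X]
    [InnerProductSpace ℝ X] [NormedAddCommGroup Y] [InnerProductSpace ℝ Y] {K H : X × Y → ℝ}
    {gE : X × Y → X} {gB : X × Y → Y}
    (hgrad : ∀ p : X × Y, HasFDerivAt K
      (((innerSL ℝ (gE p)).comp (ContinuousLinearMap.fst ℝ X Y)) +
        ((innerSL ℝ (gB p)).comp (ContinuousLinearMap.snd ℝ X Y))) p)
    {c : ℝ} (hc : c ≠ 0)
    (hH : ∀ p : X × Y, H p = K p - ⟪p.1, gE p⟫ + (2 * c)⁻¹ * (‖p.1‖ ^ 2 + ‖p.2‖ ^ 2))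
    {Φ Ψ : X × Y → X × Y} (hΦ : ∀ p : X × Y, Φ p = (p.1 - c • gE p, p.2))
    (hleft : Function.LeftInverse Ψ Φ) (hright : Function.RightInverse Ψ Φ) {E : X} {B : Y}
    (hΨ : DifferentiableAt ℝ Ψ (Φ (E, B))) :
    HasFDerivAt (H ∘ Ψ)
      (((innerSL ℝ (c⁻¹ • E)).comp (ContinuousLinearMap.fst ℝ X Y)) +
        ((innerSL ℝ (c⁻¹ • (B + c • gB (E, B)))).comp (ContinuousLinearMap.snd ℝ X Y)))
      (Φ (E, B)) := by
  have hsnd := snd_apply_eq_of_rightInverse (fun p => by rw [hΦ]) hright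
  have hcomp : H ∘ Ψ = fun z : X × Y => K ((Ψ z).1, z.2) + c⁻¹ * ⟪(Ψ z).1, z.1⟫
      - (2 * c)⁻¹ * ‖(Ψ z).1‖ ^ 2 + (2 * c)⁻¹ * ‖z.2‖ ^ 2 := by
    funext z
    rw [Function.comp_apply, hamiltonian_eq_legendre hc hH hΦ, hright z, ← hsnd z]
  have hE : (Ψ (Φ (E, B))).1 = E := by rw [hleft]
  rw [hΦ] at hΨ hE ⊢
  rw [hcomp]
  exact hasFDerivAt_legendre hgrad hc hΨ.hasFDerivAt.fst hE

end MaxwellHamiltonian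

open MaxwellHamiltonian in
theorem gradient_of_transformed_maxwell_hamiltonian_general
    {X Y : Type*} [NormedAddCommGroup X] [InnerProductSpace ℝ X]
    [NormedAddCommGroup Y] [InnerProductSpace ℝ Y]
    (K : X × Y → ℝ)
    (gE : X × Y → X) (gB : X × Y → Y)
    (hgrad : ∀ p : X × Y, HasFDerivAt K
      (((innerSL ℝ (gE p)).comp (ContinuousLinearMap.fst ℝ X Y)) +
        ((innerSL ℝ (gB p)).comp (ContinuousLinearMap.snd ℝ X Y))) p)
    (H : X × Y → ℝ)
    (hH : ∀ p : X × Y, H p = K p - ⟪p.1, gE p⟫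
      + (1 / (8 * Real.pi)) * (‖p.1‖ ^ 2 + ‖p.2‖ ^ 2))
    (Φ : X × Y → X × Y)
    (hΦ : ∀ p : X × Y, Φ p = (p.1 - (4 * Real.pi) • gE p, p.2))
    (Ψ : X × Y → X × Y)
    (hleft : Function.LeftInverse Ψ Φ) (hright : Function.RightInverse Ψ Φ)
    (hΨ : ContDiff ℝ 1 Ψ) :
    ∀ (E : X) (B : Y),
      DifferentiableAt ℝ (H ∘ Ψ) (Φ (E, B)) ∧
      ∀ (δD : X) (δB : Y),
        fderiv ℝ (H ∘ Ψ) (Φ (E, B)) (δD, δB)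
          = ⟪(1 / (4 * Real.pi)) • E, δD⟫
            + ⟪(1 / (4 * Real.pi)) • (B + (4 * Real.pi) • gB (E, B)), δB⟫ := by
  intro E B
  have hH' (p : X × Y) : H p = K p - ⟪p.1, gE p⟫
      + (2 * (4 * Real.pi))⁻¹ * (‖p.1‖ ^ 2 + ‖p.2‖ ^ 2) := by
    rw [hH]
    ring
  have hderiv := hasFDerivAt_hamiltonian_comp_inverse (E := E) (B := B) hgrad
    (by positivity) hH' hΦ hleft hright (hΨ.differentiable one_ne_zero _)
  refine ⟨hderiv.differentiableAt, fun δD δB => ?_⟩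
  rw [hderiv.fderiv, one_div]
  rfl

/-- **Derivatives of the macroscopic Maxwell Hamiltonian** (Appendix B Proposition, abstract
Hilbert-space form). With `H(E,B) = K(E,B) − ⟪E, ∇_E K⟫ + (1/8π)(‖E‖² + ‖B‖²)`,
`D = E − 4π ∇_E K`, `Hf = B + 4π ∇_B K`, and `Φ(E,B) = (D(E,B), B)` a bijection with
continuously differentiable inverse `Ψ`, the transformed Hamiltonian `H̄ = H ∘ Ψ` satisfies
`DH̄(Φ(E,B))(δD, δB) = ⟪E/4π, δD⟫ + ⟪Hf/4π, δB⟫`. -/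
theorem gradient_of_transformed_maxwell_hamiltonian
    {X Y : Type*} [NormedAddCommGroup X] [InnerProductSpace ℝ X] [CompleteSpace X]
    [NormedAddCommGroup Y] [InnerProductSpace ℝ Y] [CompleteSpace Y]
    (K : X × Y → ℝ) (hK : ContDiff ℝ 2 K)
    (gE : X × Y → X) (gB : X × Y → Y)
    (hgrad : ∀ p : X × Y, HasFDerivAt K
      (((innerSL ℝ (gE p)).comp (ContinuousLinearMap.fst ℝ X Y)) +
        ((innerSL ℝ (gB p)).comp (ContinuousLinearMap.snd ℝ X Y))) p)
    (H : X × Y → ℝ)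
    (hH : ∀ p : X × Y, H p = K p - ⟪p.1, gE p⟫
      + (1 / (8 * Real.pi)) * (‖p.1‖ ^ 2 + ‖p.2‖ ^ 2))
    (Φ : X × Y → X × Y)
    (hΦ : ∀ p : X × Y, Φ p = (p.1 - (4 * Real.pi) • gE p, p.2))
    (Ψ : X × Y → X × Y)
    (hleft : Function.LeftInverse Ψ Φ) (hright : Function.RightInverse Ψ Φ)
    (hΨ : ContDiff ℝ 1 Ψ) :
    ∀ (E : X) (B : Y),
      DifferentiableAt ℝ (H ∘ Ψ) (Φ (E, B)) ∧
      ∀ (δD : X) (δB : Y),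
        fderiv ℝ (H ∘ Ψ) (Φ (E, B)) (δD, δB)
          = ⟪(1 / (4 * Real.pi)) • E, δD⟫
            + ⟪(1 / (4 * Real.pi)) • (B + (4 * Real.pi) • gB (E, B)), δB⟫ :=
  gradient_of_transformed_maxwell_hamiltonian_general K gE gB hgrad H hH Φ hΦ Ψ hleft hright hΨ
end

section
/- Let c > 0 and v ∈ ℝ³ with 0 < ‖v‖ < c, and let L, L' : ℝ³ × ℝ³ → ℝ be differentiable functions satisfying L(E, B) = L'(𝔹(v)(E, B)) for all (E, B). Fix (E, B), set (E', B') = 𝔹(v)(E, B), and define D, H, D', H' ∈ ℝ³ by D = ∇_E L(E,B), H = −∇_B L(E,B), D' = ∇_{E'} L'(E',B'), H' = −∇_{B'} L'(E',B') (gradients with respect to the standard inner product on ℝ³). Then D' = γ(D + (1/c²) v×H) + (1 − γ)((v·D)/‖v‖²)v and H' = γ(H − v×D) + (1 − γ)((v·H)/‖v‖²)v, where γ = (1 − ‖v‖²/c²)^(−1/2). -/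
open RealInnerProductSpace

/-- The cross product on `ℝ³` (Euclidean space). -/
noncomputable def cross3 (u v : EuclideanSpace ℝ (Fin 3)) : EuclideanSpace ℝ (Fin 3) :=
  (WithLp.equiv 2 (Fin 3 → ℝ)).symm
    (crossProduct ((WithLp.equiv 2 (Fin 3 → ℝ)) u) ((WithLp.equiv 2 (Fin 3 → ℝ)) v))

/-- The Lorentz-boost action `𝔹(v)` on an electromagnetic field pair `(E, B)`:
`𝔹(v)(E, B) = (γE + (1 − γ)((v·E)/‖v‖²)v + γ v×B, γB + (1 − γ)((v·B)/‖v‖²)v − (γ/c²) v×E)`,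
with `γ = (1 − ‖v‖²/c²)^(−1/2)`. -/
noncomputable def lorentzBoost (c : ℝ) (v : EuclideanSpace ℝ (Fin 3))
    (EB : EuclideanSpace ℝ (Fin 3) × EuclideanSpace ℝ (Fin 3)) :
    EuclideanSpace ℝ (Fin 3) × EuclideanSpace ℝ (Fin 3) :=
  let γ : ℝ := 1 / Real.sqrt (1 - ‖v‖ ^ 2 / c ^ 2)
  (γ • EB.1 + ((1 - γ) * (⟪v, EB.1⟫ / ‖v‖ ^ 2)) • v + γ • cross3 v EB.2,
   γ • EB.2 + ((1 - γ) * (⟪v, EB.2⟫ / ‖v‖ ^ 2)) • v - (γ / c ^ 2) • cross3 v EB.1)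

/-! Because `𝔹(-v)` inverts `𝔹(v)` (a direct computation from `γ² (1 - ‖v‖²/c²) = 1` and
`v × (v × x) = (v·x) v - ‖v‖² x`), the relation between the Lagrangians reads `L' = L ∘ 𝔹(-v)`, so
the chain rule gives `dL' = dL ∘ 𝔹(-v)`. Writing differentials through the pairing
`⟨(D, H), (E, B)⟩ = D·E - H·B`, the primed fields are the transpose of `𝔹(-v)` applied to `(D, H)`,
and that transpose is computed from the antisymmetry `(a, v × y) = -(v × a, y)`. -/

open scoped Matrix

local notation "ℝ³" => EuclideanSpace ℝ (Fin 3)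

theorem EuclideanSpace.real_inner_eq_dotProduct {ι : Type*} [Fintype ι]
    (u v : EuclideanSpace ℝ ι) : ⟪u, v⟫ = u.ofLp ⬝ᵥ v.ofLp := by
  simp [EuclideanSpace.inner_eq_star_dotProduct, dotProduct_comm]

theorem cross3_eq_toLp (u v : ℝ³) : cross3 u v = WithLp.toLp 2 (u.ofLp ⨯₃ v.ofLp) := rfl

theorem cross3_add_right (v a b : ℝ³) : cross3 v (a + b) = cross3 v a + cross3 v b := by
  simp [cross3_eq_toLp]

theorem cross3_sub_right (v a b : ℝ³) : cross3 v (a - b) = cross3 v a - cross3 v b := by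
  simp [cross3_eq_toLp]

theorem cross3_smul_right (v : ℝ³) (r : ℝ) (a : ℝ³) : cross3 v (r • a) = r • cross3 v a := by
  simp [cross3_eq_toLp]

theorem cross3_neg_left (v a : ℝ³) : cross3 (-v) a = -cross3 v a := by
  simp [cross3_eq_toLp, ← WithLp.toLp_neg]

theorem cross3_neg_right (v a : ℝ³) : cross3 v (-a) = -cross3 v a := by
  simp [cross3_eq_toLp, ← WithLp.toLp_neg]

theorem cross3_self (v : ℝ³) : cross3 v v = 0 := by
  simp [cross3_eq_toLp]

theorem inner_self_cross3 (v y : ℝ³) : ⟪v, cross3 v y⟫ = 0 := by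
  simp [cross3_eq_toLp, EuclideanSpace.real_inner_eq_dotProduct]

theorem inner_cross3_right (a v y : ℝ³) : ⟪a, cross3 v y⟫ = -⟪cross3 v a, y⟫ := by
  simp only [cross3_eq_toLp, EuclideanSpace.real_inner_eq_dotProduct]
  rw [← cross_anticomm, dotProduct_neg, triple_product_permutation, dotProduct_comm]

theorem cross3_cross3_self (v x : ℝ³) : cross3 v (cross3 v x) = ⟪v, x⟫ • v - ‖v‖ ^ 2 • x := by
  rw [← real_inner_self_eq_norm_sq]
  simp only [cross3_eq_toLp, EuclideanSpace.real_inner_eq_dotProduct,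
    cross_cross_eq_smul_sub_smul']
  rfl

theorem lorentz_gamma_sq_mul {c : ℝ} {v : ℝ³} (hvc : ‖v‖ < c) :
    (1 / √(1 - ‖v‖ ^ 2 / c ^ 2)) ^ 2 * (c ^ 2 - ‖v‖ ^ 2) = c ^ 2 := by
  have hc : 0 < c := (norm_nonneg v).trans_lt hvc
  have hs : 0 < c ^ 2 - ‖v‖ ^ 2 := by nlinarith [norm_nonneg v]
  rw [one_sub_div (by positivity), div_pow, one_pow, Real.sq_sqrt (by positivity)]
  field_simp

noncomputable def lorentzBoostCLM (c : ℝ) (v : ℝ³) : (ℝ³ × ℝ³) →L[ℝ] ℝ³ × ℝ³ :=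
  LinearMap.toContinuousLinearMap
    { toFun := lorentzBoost c v
      map_add' := fun x y => by
        simp only [lorentzBoost, Prod.fst_add, Prod.snd_add, inner_add_right, cross3_add_right,
          Prod.mk_add_mk, Prod.ext_iff]
        constructor <;> module
      map_smul' := fun r x => by
        simp only [lorentzBoost, Prod.smul_fst, Prod.smul_snd, real_inner_smul_right,
          cross3_smul_right, RingHom.id_apply, Prod.smul_mk, Prod.ext_iff]
        constructor <;> module }

@[simp]
theorem coe_lorentzBoostCLM (c : ℝ) (v : ℝ³) : ⇑(lorentzBoostCLM c v) = lorentzBoost c v := rfl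

theorem lorentzBoost_lorentzBoost_neg {c : ℝ} {v : ℝ³} (hvc : ‖v‖ < c) (EB : ℝ³ × ℝ³) :
    lorentzBoost c v (lorentzBoost c (-v) EB) = EB := by
  rcases eq_or_ne v 0 with rfl | hv
  · simp [lorentzBoost, cross3_eq_toLp]
  have hγ := lorentz_gamma_sq_mul hvc
  have hc : c ≠ 0 := ((norm_nonneg v).trans_lt hvc).ne'
  have hv' : ‖v‖ ≠ 0 := norm_ne_zero_iff.mpr hv
  simp only [lorentzBoost, norm_neg, inner_neg_left, cross3_neg_left]
  generalize 1 / √(1 - ‖v‖ ^ 2 / c ^ 2) = γ at hγ ⊢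
  simp only [inner_add_right, inner_sub_right, real_inner_smul_right, inner_neg_right,
    cross3_add_right, cross3_sub_right, cross3_smul_right, cross3_neg_right, cross3_self,
    inner_self_cross3, cross3_cross3_self, real_inner_self_eq_norm_sq]
  ext1 <;> simp only <;> match_scalars <;> field_simp <;> grind

theorem lorentzBoost_neg_lorentzBoost {c : ℝ} {v : ℝ³} (hvc : ‖v‖ < c) (EB : ℝ³ × ℝ³) :
    lorentzBoost c (-v) (lorentzBoost c v EB) = EB := by
  simpa using lorentzBoost_lorentzBoost_neg (v := -v) (by simpa using hvc) EB

section fieldPairing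

variable {E G : Type*} [NormedAddCommGroup E] [InnerProductSpace ℝ E]
  [NormedAddCommGroup G] [InnerProductSpace ℝ G]

def fieldPairing (DH : E × G) (EB : E × G) : ℝ := ⟪DH.1, EB.1⟫ - ⟪DH.2, EB.2⟫

theorem eq_of_fieldPairing_eq {a b : E × G} (h : ∀ x, fieldPairing a x = fieldPairing b x) :
    a = b := by
  refine Prod.ext (ext_inner_right ℝ fun y => ?_) (ext_inner_right ℝ fun y => ?_)
  · simpa [fieldPairing] using h (y, 0)
  · simpa [fieldPairing] using h (0, y)

theorem fderiv_eq_fieldPairing [CompleteSpace E] [CompleteSpace G] {F : E × G → ℝ} {p : E × G}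
    (hF : DifferentiableAt ℝ F p) (x : E × G) :
    fderiv ℝ F p x =
      fieldPairing (gradient (fun e => F (e, p.2)) p.1, -gradient (fun g => F (p.1, g)) p.2) x := by
  have hfst : fderiv ℝ (fun e => F (e, p.2)) p.1 = (fderiv ℝ F p).comp (.inl ℝ E G) :=
    (hF.hasFDerivAt.comp p.1 (hasFDerivAt_prodMk_left p.1 p.2)).fderiv
  have hsnd : fderiv ℝ (fun g => F (p.1, g)) p.2 = (fderiv ℝ F p).comp (.inr ℝ E G) :=
    (hF.hasFDerivAt.comp p.2 (hasFDerivAt_prodMk_right p.1 p.2)).fderiv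
  rw [fieldPairing, inner_neg_left, sub_neg_eq_add, gradient, gradient,
    InnerProductSpace.toDual_symm_apply, InnerProductSpace.toDual_symm_apply, hfst, hsnd]
  simp [← map_add]

end fieldPairing

noncomputable def macroscopicBoost (c : ℝ) (v : ℝ³) (DH : ℝ³ × ℝ³) : ℝ³ × ℝ³ :=
  let γ : ℝ := 1 / Real.sqrt (1 - ‖v‖ ^ 2 / c ^ 2)
  (γ • (DH.1 + (1 / c ^ 2) • cross3 v DH.2) + ((1 - γ) * (⟪v, DH.1⟫ / ‖v‖ ^ 2)) • v,
   γ • (DH.2 - cross3 v DH.1) + ((1 - γ) * (⟪v, DH.2⟫ / ‖v‖ ^ 2)) • v)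

theorem fieldPairing_lorentzBoost_neg (c : ℝ) (v : ℝ³) (DH EB : ℝ³ × ℝ³) :
    fieldPairing DH (lorentzBoost c (-v) EB) = fieldPairing (macroscopicBoost c v DH) EB := by
  simp only [fieldPairing, lorentzBoost, macroscopicBoost, norm_neg, inner_neg_left,
    cross3_neg_left, inner_add_left, inner_add_right, inner_sub_left, inner_sub_right,
    real_inner_smul_left, real_inner_smul_right, inner_neg_right, inner_cross3_right (v := v)]
  rw [real_inner_comm DH.1 v, real_inner_comm DH.2 v]
  ring

theorem macroscopic_fields_transformation_general (c : ℝ)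
    (v : EuclideanSpace ℝ (Fin 3)) (hvc : ‖v‖ < c)
    (L L' : EuclideanSpace ℝ (Fin 3) × EuclideanSpace ℝ (Fin 3) → ℝ)
    (hL : Differentiable ℝ L)
    (hrel : ∀ EB, L EB = L' (lorentzBoost c v EB))
    (E B : EuclideanSpace ℝ (Fin 3)) :
    let γ : ℝ := 1 / Real.sqrt (1 - ‖v‖ ^ 2 / c ^ 2)
    let E' := (lorentzBoost c v (E, B)).1
    let B' := (lorentzBoost c v (E, B)).2
    let D := gradient (fun e => L (e, B)) E
    let H := -gradient (fun b => L (E, b)) B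
    let D' := gradient (fun e => L' (e, B')) E'
    let H' := -gradient (fun b => L' (E', b)) B'
    D' = γ • (D + (1 / c ^ 2) • cross3 v H) + ((1 - γ) * (⟪v, D⟫ / ‖v‖ ^ 2)) • v ∧
    H' = γ • (H - cross3 v D) + ((1 - γ) * (⟪v, H⟫ / ‖v‖ ^ 2)) • v := by
  intro γ E' B' D H D' H'
  have hL'_eq : L' = L ∘ lorentzBoostCLM c (-v) :=
    funext fun EB => by simp [hrel, lorentzBoost_lorentzBoost_neg hvc]
  have hderiv : HasFDerivAt L' ((fderiv ℝ L (E, B)).comp (lorentzBoostCLM c (-v))) (E', B') := by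
    have hback : lorentzBoostCLM c (-v) (E', B') = (E, B) := lorentzBoost_neg_lorentzBoost hvc _
    rw [hL'_eq]
    refine HasFDerivAt.comp _ ?_ (lorentzBoostCLM c (-v)).hasFDerivAt
    rw [hback]
    exact (hL (E, B)).hasFDerivAt
  have key : (D', H') = macroscopicBoost c v (D, H) := eq_of_fieldPairing_eq fun EB => by
    rw [← fderiv_eq_fieldPairing hderiv.differentiableAt, hderiv.fderiv,
      ContinuousLinearMap.comp_apply, fderiv_eq_fieldPairing (hL _), coe_lorentzBoostCLM,
      fieldPairing_lorentzBoost_neg]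
  exact Prod.ext_iff.mp key

/-- **Transformation law of the macroscopic fields** (Section 4.1): if the Lagrangians `L`, `L'`
are related by `L(E,B) = L'(𝔹(v)(E,B))` and `D = ∇_E L`, `H = −∇_B L` (and primed versions at
`(E',B') = 𝔹(v)(E,B)`), then `D' = γ(D + (1/c²) v×H) + (1−γ)((v·D)/‖v‖²)v` and
`H' = γ(H − v×D) + (1−γ)((v·H)/‖v‖²)v`. -/
theorem macroscopic_fields_transformation (c : ℝ) (hc : 0 < c)
    (v : EuclideanSpace ℝ (Fin 3)) (hv0 : 0 < ‖v‖) (hvc : ‖v‖ < c)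
    (L L' : EuclideanSpace ℝ (Fin 3) × EuclideanSpace ℝ (Fin 3) → ℝ)
    (hL : Differentiable ℝ L) (hL' : Differentiable ℝ L')
    (hrel : ∀ EB, L EB = L' (lorentzBoost c v EB))
    (E B : EuclideanSpace ℝ (Fin 3)) :
    let γ : ℝ := 1 / Real.sqrt (1 - ‖v‖ ^ 2 / c ^ 2)
    let E' := (lorentzBoost c v (E, B)).1
    let B' := (lorentzBoost c v (E, B)).2
    let D := gradient (fun e => L (e, B)) E
    let H := -gradient (fun b => L (E, b)) B
    let D' := gradient (fun e => L' (e, B')) E'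
    let H' := -gradient (fun b => L' (E', b)) B'
    D' = γ • (D + (1 / c ^ 2) • cross3 v H) + ((1 - γ) * (⟪v, D⟫ / ‖v‖ ^ 2)) • v ∧
    H' = γ • (H - cross3 v D) + ((1 - γ) * (⟪v, H⟫ / ‖v‖ ^ 2)) • v :=
  macroscopic_fields_transformation_general c v hvc L L' hL hrel E B
end
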